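/- Let R_1, …, R_n be a REP instance in boundary B with (integral) optimal density k, and let k_f be the infimum, over all fractional solutions r, of the supremum over points p ∈ B of the fractional density of r at p. Then k/4 ≤ k_f ≤ k. -/

import Mathlib

/-- One of the four axis-aligned escape directions. -/
inductive Dir | left | right | up | down
deriving DecidableEq

instance : Fintype Dir :=
  ⟨{Dir.left, Dir.right, Dir.up, Dir.down}, fun x => by cases x <;> simp⟩

/-- A closed axis-aligned rectangle `[xmin,xmax] × [ymin,ymax]`. -/
structure Rect where
  xmin : ℝ
  xmax : ℝ
  ymin : ℝ
  ymax : ℝ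

/-- The point set of a rectangle. -/
def Rect.pts (r : Rect) : Set (ℝ × ℝ) :=
  {p | r.xmin ≤ p.1 ∧ p.1 ≤ r.xmax ∧ r.ymin ≤ p.2 ∧ p.2 ≤ r.ymax}

/-- The rectangle is a genuine (nonempty) closed rectangle. -/
def Rect.proper (r : Rect) : Prop := r.xmin ≤ r.xmax ∧ r.ymin ≤ r.ymax

/-- The boundary box `B = [0,W] × [0,H]`. -/
def boundaryBox (W H : ℝ) : Set (ℝ × ℝ) := {p | 0 ≤ p.1 ∧ p.1 ≤ W ∧ 0 ≤ p.2 ∧ p.2 ≤ H}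

/-- The rectangle is contained in the boundary box `[0,W] × [0,H]`. -/
def Rect.inB (W H : ℝ) (r : Rect) : Prop :=
  0 ≤ r.xmin ∧ r.xmax ≤ W ∧ 0 ≤ r.ymin ∧ r.ymax ≤ H

/-- The escape path of a rectangle in a given direction, inside `[0,W] × [0,H]`. -/
def Rect.escape (W H : ℝ) (r : Rect) : Dir → Set (ℝ × ℝ)
  | Dir.right => {p | r.xmin ≤ p.1 ∧ p.1 ≤ W ∧ r.ymin ≤ p.2 ∧ p.2 ≤ r.ymax}
  | Dir.left  => {p | 0 ≤ p.1 ∧ p.1 ≤ r.xmax ∧ r.ymin ≤ p.2 ∧ p.2 ≤ r.ymax}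
  | Dir.up    => {p | r.xmin ≤ p.1 ∧ p.1 ≤ r.xmax ∧ r.ymin ≤ p.2 ∧ p.2 ≤ H}
  | Dir.down  => {p | r.xmin ≤ p.1 ∧ p.1 ≤ r.xmax ∧ 0 ≤ p.2 ∧ p.2 ≤ r.ymax}

/-- Density at point `p` of the escape assignment `σ` restricted to the subfamily `S`. -/
noncomputable def density {n : ℕ} (W H : ℝ) (R : Fin n → Rect) (S : Set (Fin n))
    (σ : Fin n → Dir) (p : ℝ × ℝ) : ℕ :=
  {i | i ∈ S ∧ p ∈ (R i).escape W H (σ i)}.ncard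

/-- The optimal (minimum over assignments of the maximum over points of `B`) density of
the subfamily `S`. -/
noncomputable def optDensity {n : ℕ} (W H : ℝ) (R : Fin n → Rect) (S : Set (Fin n)) : ℕ :=
  sInf {k | ∃ σ : Fin n → Dir, ∀ p ∈ boundaryBox W H, density W H R S σ p ≤ k}

/-- `R j` blocks `R i` in direction `α`. -/
def blocks {n : ℕ} (W H : ℝ) (R : Fin n → Rect) (α : Dir) (j i : Fin n) : Prop :=
  j ≠ i ∧ ¬ Disjoint (R j).pts ((R i).escape W H α)

/-- `R i` is free in direction `α` within the subfamily `S`: no other rectangle of `S`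
blocks it in direction `α`. -/
def free {n : ℕ} (W H : ℝ) (R : Fin n → Rect) (S : Set (Fin n)) (i : Fin n) (α : Dir) : Prop :=
  ∀ j ∈ S, j ≠ i → Disjoint ((R i).escape W H α) (R j).pts

/-- `peel W H R ℓ` is the set of indices remaining after removing peeling levels `1,…,ℓ`. -/
def peel {n : ℕ} (W H : ℝ) (R : Fin n → Rect) : ℕ → Set (Fin n)
  | 0 => Set.univ
  | ℓ + 1 => {i ∈ peel W H R ℓ | ¬ ∃ α, free W H R (peel W H R ℓ) i α}

/-- The peeling level of rectangle `R i` (the least `ℓ` at which it has been removed). -/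
noncomputable def levelOf {n : ℕ} (W H : ℝ) (R : Fin n → Rect) (i : Fin n) : ℕ :=
  sInf {ℓ | i ∉ peel W H R ℓ}

/-- The number `ρ` of nonempty peeling levels. -/
noncomputable def numLevels {n : ℕ} (W H : ℝ) (R : Fin n → Rect) : ℕ :=
  sInf {ℓ | peel W H R ℓ = ∅}

/-! The rounding argument: every rectangle puts weight at least `1/4` on some direction, and
escaping in that direction costs at most four times the fractional density at every point.
Conversely an integral assignment is a fractional solution with the same density. -/

open Finset

section FracDensity

variable {ι : Type*} [Fintype ι] (W H : ℝ) (R : ι → Rect)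

noncomputable def fracDensity (r : ι → Dir → ℝ) (p : ℝ × ℝ) : ℝ :=
  ∑ i, ∑ α, ((R i).escape W H α).indicator (fun _ => r i α) p

variable {W H R}

lemma fracDensity_nonneg {r : ι → Dir → ℝ} (hr : ∀ i α, 0 ≤ r i α) (p : ℝ × ℝ) :
    0 ≤ fracDensity W H R r p :=
  sum_nonneg fun i _ => sum_nonneg fun α _ => Set.indicator_apply_nonneg fun _ => hr i α

lemma fracDensity_mono {r r' : ι → Dir → ℝ} (h : ∀ i α, r i α ≤ r' i α) (p : ℝ × ℝ) :
    fracDensity W H R r p ≤ fracDensity W H R r' p :=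
  sum_le_sum fun i _ => sum_le_sum fun α _ => Set.indicator_le_indicator (h i α)

lemma fracDensity_const_mul (c : ℝ) (r : ι → Dir → ℝ) (p : ℝ × ℝ) :
    fracDensity W H R (fun i α => c * r i α) p = c * fracDensity W H R r p := by
  simp only [fracDensity, mul_sum, Set.indicator_const_mul]

end FracDensity

def assignmentWeights {ι : Type*} (σ : ι → Dir) (i : ι) (α : Dir) : ℝ :=
  if α = σ i then 1 else 0

lemma sum_assignmentWeights {ι : Type*} (σ : ι → Dir) (i : ι) :
    ∑ α, assignmentWeights σ i α = 1 := by
  simp [assignmentWeights]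

lemma fracDensity_assignmentWeights {n : ℕ} (W H : ℝ) (R : Fin n → Rect) (σ : Fin n → Dir)
    (p : ℝ × ℝ) :
    fracDensity W H R (assignmentWeights σ) p = density W H R Set.univ σ p := by
  classical
  have hcard : density W H R Set.univ σ p = #{i | p ∈ (R i).escape W H (σ i)} := by
    rw [density, ← Set.ncard_coe_finset]
    simp
  rw [hcard, card_filter, Nat.cast_sum, fracDensity]
  refine sum_congr rfl fun i _ => ?_
  rw [sum_eq_single (σ i) (fun α _ hα => by simp [assignmentWeights, hα]) (by simp)]
  by_cases hp : p ∈ (R i).escape W H (σ i) <;> simp [assignmentWeights, hp]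

lemma exists_quarter_le {r : Dir → ℝ} (hr : 1 ≤ ∑ α, r α) : ∃ α, 1 / 4 ≤ r α := by
  have hquarter : ∑ _α : Dir, (1 / 4 : ℝ) ≤ ∑ α, r α := by
    rwa [sum_const, card_univ, show Fintype.card Dir = 4 from rfl, nsmul_eq_mul, Nat.cast_ofNat,
      mul_one_div_cancel four_ne_zero]
  obtain ⟨α, -, hα⟩ := exists_le_of_sum_le ⟨Dir.left, mem_univ _⟩ hquarter
  exact ⟨α, hα⟩

lemma density_le_four_mul_fracDensity {n : ℕ} {W H : ℝ} {R : Fin n → Rect}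
    {r : Fin n → Dir → ℝ} {σ : Fin n → Dir} (hr : ∀ i α, 0 ≤ r i α)
    (hσ : ∀ i, 1 / 4 ≤ r i (σ i)) (p : ℝ × ℝ) :
    (density W H R Set.univ σ p : ℝ) ≤ 4 * fracDensity W H R r p := by
  rw [← fracDensity_assignmentWeights, ← fracDensity_const_mul]
  refine fracDensity_mono (fun i α => ?_) p
  unfold assignmentWeights
  split_ifs with h
  · subst h; linarith [hσ i]
  · linarith [hr i α]

section OptDensity

variable {n : ℕ} {W H : ℝ} {R : Fin n → Rect}

lemma exists_density_le_optDensity (W H : ℝ) (R : Fin n → Rect) :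
    ∃ σ : Fin n → Dir, ∀ p ∈ boundaryBox W H,
      density W H R Set.univ σ p ≤ optDensity W H R Set.univ := by
  refine Nat.sInf_mem (s := {k | ∃ σ : Fin n → Dir, ∀ p ∈ boundaryBox W H,
    density W H R Set.univ σ p ≤ k}) ⟨n, fun _ => Dir.left, fun p _ => ?_⟩
  simpa [density] using Set.ncard_le_card {i | i ∈ Set.univ ∧ p ∈ (R i).escape W H Dir.left}

lemma optDensity_le_of_density_le {σ : Fin n → Dir} {t : ℝ} (ht : 0 ≤ t)
    (hσ : ∀ p ∈ boundaryBox W H, (density W H R Set.univ σ p : ℝ) ≤ t) :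
    (optDensity W H R Set.univ : ℝ) ≤ t := by
  have hfloor : optDensity W H R Set.univ ≤ ⌊t⌋₊ :=
    Nat.sInf_le ⟨σ, fun p hp => Nat.le_floor (hσ p hp)⟩
  exact (Nat.cast_le.mpr hfloor).trans (Nat.floor_le ht)

lemma optDensity_eq_zero_of_boundaryBox_eq_empty (hB : boundaryBox W H = ∅) :
    optDensity W H R Set.univ = 0 :=
  Nat.eq_zero_of_le_zero <| Nat.sInf_le ⟨fun _ => Dir.left, by simp [hB]⟩

end OptDensity

section FracDensityBounds

variable {n : ℕ} (W H : ℝ) (R : Fin n → Rect)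

def fracDensityBounds : Set ℝ :=
  {s | ∃ r : Fin n → Dir → ℝ, (∀ i α, 0 ≤ r i α ∧ r i α ≤ 1) ∧ (∀ i, 1 ≤ ∑ α, r i α) ∧
    ∀ p ∈ boundaryBox W H, fracDensity W H R r p ≤ s}

variable {W H R}

lemma optDensity_mem_fracDensityBounds :
    (optDensity W H R Set.univ : ℝ) ∈ fracDensityBounds W H R := by
  obtain ⟨σ, hσ⟩ := exists_density_le_optDensity W H R
  refine ⟨assignmentWeights σ, fun i α => ?_, fun i => (sum_assignmentWeights σ i).ge,
    fun p hp => ?_⟩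
  · unfold assignmentWeights
    split_ifs <;> norm_num
  · rw [fracDensity_assignmentWeights]
    exact_mod_cast hσ p hp

lemma optDensity_le_four_mul_of_mem_fracDensityBounds (hB : (boundaryBox W H).Nonempty)
    {s : ℝ} (hs : s ∈ fracDensityBounds W H R) : (optDensity W H R Set.univ : ℝ) ≤ 4 * s := by
  obtain ⟨r, hr01, hr1, hrs⟩ := hs
  obtain ⟨p₀, hp₀⟩ := hB
  have hr0 : ∀ i α, 0 ≤ r i α := fun i α => (hr01 i α).1
  choose σ hσ using fun i => exists_quarter_le (hr1 i)
  refine optDensity_le_of_density_le (σ := σ) ?_ fun p hp => ?_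
  · linarith [fracDensity_nonneg (W := W) (H := H) (R := R) hr0 p₀, hrs p₀ hp₀]
  · linarith [density_le_four_mul_fracDensity (W := W) (H := H) (R := R) hr0 hσ p, hrs p hp]

lemma bddBelow_fracDensityBounds (hB : (boundaryBox W H).Nonempty) :
    BddBelow (fracDensityBounds W H R) := by
  obtain ⟨p₀, hp₀⟩ := hB
  refine ⟨0, ?_⟩
  rintro s ⟨r, hr01, -, hrs⟩
  exact (fracDensity_nonneg (fun i α => (hr01 i α).1) p₀).trans (hrs p₀ hp₀)

lemma fracDensityBounds_eq_univ_of_boundaryBox_eq_empty (hB : boundaryBox W H = ∅) :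
    fracDensityBounds W H R = Set.univ := by
  refine Set.eq_univ_of_forall fun s => ?_
  obtain ⟨r, hr01, hr1, -⟩ := optDensity_mem_fracDensityBounds (W := W) (H := H) (R := R)
  exact ⟨r, hr01, hr1, by simp [hB]⟩

end FracDensityBounds

theorem fractional_vs_integral_density_general {n : ℕ} (W H : ℝ) (R : Fin n → Rect)
    (k : ℕ) (hk : k = optDensity W H R Set.univ)
    (kf : ℝ)
    (hkf : kf = sInf {s : ℝ | ∃ r : Fin n → Dir → ℝ,
        (∀ i α, 0 ≤ r i α ∧ r i α ≤ 1) ∧ (∀ i, 1 ≤ ∑ α : Dir, r i α) ∧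
        ∀ p ∈ boundaryBox W H,
          ∑ i : Fin n, ∑ α : Dir, ((R i).escape W H α).indicator (fun _ => r i α) p ≤ s}) :
    (k : ℝ) / 4 ≤ kf ∧ kf ≤ k := by
  change kf = sInf (fracDensityBounds W H R) at hkf
  subst hk hkf
  rcases (boundaryBox W H).eq_empty_or_nonempty with hB | hB
  · -- for an empty box both sides are `0`: `kf` is the junk value `sInf Set.univ = 0`
    simp [optDensity_eq_zero_of_boundaryBox_eq_empty hB,
      fracDensityBounds_eq_univ_of_boundaryBox_eq_empty hB]
  · refine ⟨le_csInf ⟨_, optDensity_mem_fracDensityBounds⟩ fun s hs => ?_,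
      csInf_le (bddBelow_fracDensityBounds hB) optDensity_mem_fracDensityBounds⟩
    linarith [optDensity_le_four_mul_of_mem_fracDensityBounds hB hs]

/-- For a REP instance with integral optimal density `k`, the optimal
fractional density `k_f` (infimum over fractional solutions of the supremum of the
fractional density over `B`) satisfies `k/4 ≤ k_f ≤ k`. -/
theorem fractional_vs_integral_density {n : ℕ} (W H : ℝ) (R : Fin n → Rect)
    (hprop : ∀ i, (R i).proper) (hin : ∀ i, (R i).inB W H)
    (k : ℕ) (hk : k = optDensity W H R Set.univ)
    (kf : ℝ)
    (hkf : kf = sInf {s : ℝ | ∃ r : Fin n → Dir → ℝ,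
        (∀ i α, 0 ≤ r i α ∧ r i α ≤ 1) ∧ (∀ i, 1 ≤ ∑ α : Dir, r i α) ∧
        ∀ p ∈ boundaryBox W H,
          ∑ i : Fin n, ∑ α : Dir, ((R i).escape W H α).indicator (fun _ => r i α) p ≤ s}) :
    (k : ℝ) / 4 ≤ kf ∧ kf ≤ k :=
  fractional_vs_integral_density_general W H R k hk kf hkf
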